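/- arXiv:2107.08286 — 5 statements merged into one kernel-verified Lean document; each statement's English description precedes it below -/
import Mathlib

section
/- Under the Kronecker-form hypothesis with simple finite eigenvalues, the limit of C·adj(sE − A)·B as s → λ₁ equals (−1)^{n−ñ}·det(W^{−H}V^{−1})·(Cv₁)·(∏_{j=2}^{ñ}(λ₁ − λⱼ))·(w₁ᴴB). Consequently, C·adj(λ₁E − A)·B ≠ 0 if and only if neither Cv₁ = 0 nor w₁ᴴB = 0 (given the λⱼ are pairwise distinct). -/
open Matrix

lemma adj_eq_det_smul_inv {n' : Type*} [Fintype n'] [DecidableEq n']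
    (A : Matrix n' n' ℂ) (h : IsUnit A.det) : adjugate A = A.det • A⁻¹ := by
  calc adjugate A = (A⁻¹ * A) * adjugate A := by rw [nonsing_inv_mul _ h, one_mul]
    _ = A⁻¹ * (A.det • 1) := by rw [Matrix.mul_assoc, mul_adjugate]
    _ = A.det • A⁻¹ := by rw [mul_smul_comm, Matrix.mul_one]

lemma mul_diag_single_mul {n' : Type*} [Fintype n'] [DecidableEq n']
    (i0 : n') (c : ℂ) (V W : Matrix n' n' ℂ) :
    V * Matrix.diagonal (Pi.single i0 c) * Wᴴ =
      c • vecMulVec (fun i => V i i0) (fun j => star (W j i0)) := by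
  ext i j
  rw [Matrix.mul_apply]
  simp only [Matrix.mul_diagonal, Pi.single_apply, conjTranspose_apply,
    Matrix.smul_apply, vecMulVec_apply, smul_eq_mul]
  rw [Finset.sum_eq_single i0]
  · simp; ring
  · intro b _ hb; simp [hb]
  · simp

lemma C_vmv_B {p m n' : Type*} [Fintype p] [Fintype m] [Fintype n']
    (C : Matrix p n' ℂ) (B : Matrix n' m ℂ) (v : n' → ℂ) (w : n' → ℂ) :
    C * vecMulVec v w * B = vecMulVec (C *ᵥ v) (w ᵥ* B) := by
  rw [vecMulVec_eq Unit, vecMulVec_eq Unit, replicateCol_mulVec, replicateRow_vecMul,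
    Matrix.mul_assoc, Matrix.mul_assoc, Matrix.mul_assoc]

lemma vecMulVec_eq_zero_iff {p m : Type*} [Fintype p] [Fintype m]
    (x : p → ℂ) (y : m → ℂ) : vecMulVec x y = 0 ↔ x = 0 ∨ y = 0 := by
  constructor
  · intro h
    by_contra hc
    push_neg at hc
    obtain ⟨hx, hy⟩ := hc
    obtain ⟨i, hi⟩ := Function.ne_iff.mp hx
    obtain ⟨j, hj⟩ := Function.ne_iff.mp hy
    have := congrFun (congrFun h i) j
    simp only [vecMulVec_apply, Matrix.zero_apply, mul_eq_zero] at this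
    simp only [Pi.zero_apply] at hi hj
    tauto
  · rintro (rfl | rfl) <;> ext i j <;> simp [vecMulVec_apply]

lemma prod_erase_eq_prod_ite {ι : Type*} [DecidableEq ι] [Fintype ι] (i0 : ι) (f : ι → ℂ) :
    ∏ j ∈ Finset.univ.erase i0, f j = ∏ j ∈ Finset.univ, (if j = i0 then 1 else f j) := by
  rw [← Finset.mul_prod_erase Finset.univ _ (Finset.mem_univ i0), if_pos rfl, one_mul]
  exact Finset.prod_congr rfl fun j hj => by rw [if_neg (Finset.mem_erase.mp hj).1]

/-- Limit of `C·adj(sE − A)·B` as `s → λ₁` under the Kronecker-form hypothesis, and the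
consequent nonvanishing criterion. -/
theorem adjugate_limit_at_eigenvalue {nt k m p : ℕ}
    (A E : Matrix (Fin (nt + 1) ⊕ Fin k) (Fin (nt + 1) ⊕ Fin k) ℂ)
    (B : Matrix (Fin (nt + 1) ⊕ Fin k) (Fin m) ℂ)
    (C : Matrix (Fin p) (Fin (nt + 1) ⊕ Fin k) ℂ)
    (W V : Matrix (Fin (nt + 1) ⊕ Fin k) (Fin (nt + 1) ⊕ Fin k) ℂ)
    (hW : IsUnit W.det) (hV : IsUnit V.det)
    (lam : Fin (nt + 1) → ℂ) (hdist : Function.Injective lam)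
    (hA : Wᴴ * A * V = Matrix.fromBlocks (Matrix.diagonal lam) 0 0 1)
    (hE : Wᴴ * E * V = Matrix.fromBlocks 1 0 0 0) :
    Filter.Tendsto (fun s : ℂ => C * Matrix.adjugate (s • E - A) * B) (nhds (lam 0))
      (nhds (((-1 : ℂ) ^ k * ((Wᴴ)⁻¹ * V⁻¹).det *
          ∏ j ∈ Finset.univ.erase (0 : Fin (nt + 1)), (lam 0 - lam j)) •
        Matrix.vecMulVec (C *ᵥ (fun i => V i (Sum.inl 0)))
          (Matrix.vecMul (star (fun i => W i (Sum.inl 0))) B))) ∧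
    (C * Matrix.adjugate ((lam 0) • E - A) * B ≠ 0 ↔
      (C *ᵥ (fun i => V i (Sum.inl 0)) ≠ 0 ∧
        Matrix.vecMul (star (fun i => W i (Sum.inl 0))) B ≠ 0)) := by
  have hWH : IsUnit (Wᴴ).det := by rw [Matrix.det_conjTranspose]; exact hW.star
  set d : (Fin (nt + 1) ⊕ Fin k) → ℂ :=
    Sum.elim (fun i => lam 0 - lam i) (fun _ => -1) with hd
  set c : ℂ := (∏ j ∈ Finset.univ.erase (0 : Fin (nt + 1)), (lam 0 - lam j)) * (-1 : ℂ) ^ k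
    with hc
  -- block diagonalization
  have h1 : Wᴴ * ((lam 0) • E - A) * V = Matrix.diagonal d := by
    have h2 : Wᴴ * ((lam 0) • E - A) * V = (lam 0) • (Wᴴ * E * V) - Wᴴ * A * V := by
      rw [Matrix.mul_sub, Matrix.sub_mul, mul_smul_comm, smul_mul_assoc]
    rw [h2, hA, hE]
    ext i j
    rcases i with i | i <;> rcases j with j | j <;>
      simp [hd, Matrix.diagonal_apply, Matrix.one_apply, Sum.elim] <;>
      split_ifs <;> simp
  have hfac : (lam 0) • E - A = (Wᴴ)⁻¹ * Matrix.diagonal d * V⁻¹ := by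
    calc (lam 0) • E - A = ((Wᴴ)⁻¹ * Wᴴ) * ((lam 0) • E - A) * (V * V⁻¹) := by
          rw [nonsing_inv_mul _ hWH, mul_nonsing_inv _ hV, Matrix.one_mul, Matrix.mul_one]
      _ = (Wᴴ)⁻¹ * (Wᴴ * ((lam 0) • E - A) * V) * V⁻¹ := by
          simp only [Matrix.mul_assoc]
      _ = (Wᴴ)⁻¹ * Matrix.diagonal d * V⁻¹ := by rw [h1, Matrix.mul_assoc]
  -- adjugate of the diagonal part
  have hd0 : d (Sum.inl 0) = 0 := by simp [hd]
  have hadjd : adjugate (Matrix.diagonal d) =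
      Matrix.diagonal (Pi.single (Sum.inl (0 : Fin (nt + 1))) c) := by
    rw [adjugate_diagonal]
    apply congrArg Matrix.diagonal
    funext i
    by_cases hi : i = Sum.inl (0 : Fin (nt + 1))
    · subst hi
      rw [Pi.single_eq_same, prod_erase_eq_prod_ite, Fintype.prod_sum_type]
      simp only [hd, Sum.elim_inl, Sum.elim_inr]
      rw [hc, prod_erase_eq_prod_ite]
      simp [Sum.inl.injEq]
    · rw [Pi.single_eq_of_ne hi]
      exact Finset.prod_eq_zero
        (Finset.mem_erase.mpr ⟨fun h => hi h.symm, Finset.mem_univ _⟩) hd0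
  -- value of the full expression at lam 0
  have hval : C * Matrix.adjugate ((lam 0) • E - A) * B =
      ((-1 : ℂ) ^ k * ((Wᴴ)⁻¹ * V⁻¹).det *
          ∏ j ∈ Finset.univ.erase (0 : Fin (nt + 1)), (lam 0 - lam j)) •
        Matrix.vecMulVec (C *ᵥ (fun i => V i (Sum.inl 0)))
          (Matrix.vecMul (star (fun i => W i (Sum.inl 0))) B) := by
    have hmid : V * Matrix.diagonal (Pi.single (Sum.inl (0 : Fin (nt + 1))) c) * Wᴴ =
        c • vecMulVec (fun i => V i (Sum.inl 0)) (fun j => star (W j (Sum.inl 0))) :=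
      mul_diag_single_mul _ _ _ _
    have hw : (star (fun i => W i (Sum.inl (0 : Fin (nt + 1)))) :
        (Fin (nt + 1) ⊕ Fin k) → ℂ) = fun j => star (W j (Sum.inl 0)) := rfl
    have e1 : Matrix.adjugate ((lam 0) • E - A) =
        (V⁻¹.det * (Wᴴ)⁻¹.det) •
          (V * Matrix.diagonal (Pi.single (Sum.inl (0 : Fin (nt + 1))) c) * Wᴴ) := by
      rw [hfac, adjugate_mul_distrib, adjugate_mul_distrib,
        adj_eq_det_smul_inv _ (isUnit_nonsing_inv_det _ hV),
        adj_eq_det_smul_inv _ (isUnit_nonsing_inv_det _ hWH),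
        nonsing_inv_nonsing_inv _ hV, nonsing_inv_nonsing_inv _ hWH, hadjd]
      simp only [Matrix.smul_mul, Matrix.mul_smul, smul_smul, Matrix.mul_assoc]
      rw [mul_comm ((Wᴴ)⁻¹.det)]
    rw [e1, hmid, hw]
    simp only [Matrix.smul_mul, Matrix.mul_smul, smul_smul]
    rw [C_vmv_B]
    congr 1
    rw [Matrix.det_mul, hc]
    ring
  -- scalar nonzero
  have hs : ((-1 : ℂ) ^ k * ((Wᴴ)⁻¹ * V⁻¹).det *
      ∏ j ∈ Finset.univ.erase (0 : Fin (nt + 1)), (lam 0 - lam j)) ≠ 0 := by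
    apply mul_ne_zero (mul_ne_zero _ _)
    · exact Finset.prod_ne_zero_iff.mpr fun j hj =>
        sub_ne_zero.mpr fun h => (Finset.mem_erase.mp hj).1 (hdist h).symm
    · exact pow_ne_zero _ (by norm_num)
    · rw [Matrix.det_mul]
      exact ((isUnit_nonsing_inv_det _ hWH).mul (isUnit_nonsing_inv_det _ hV)).ne_zero
  constructor
  · have hcont : Continuous fun s : ℂ => C * Matrix.adjugate (s • E - A) * B := by
      have h1 : Continuous fun s : ℂ => s • E - A := by
        exact (continuous_id.smul continuous_const).sub continuous_const
      exact (continuous_const.matrix_mul h1.matrix_adjugate).matrix_mul continuous_const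
    have := hcont.tendsto (lam 0)
    rwa [hval] at this
  · rw [hval, Ne, smul_eq_zero, vecMulVec_eq_zero_iff, not_or, not_or]
    exact ⟨fun h => h.2, fun h => ⟨hs, h⟩⟩
end

section
/- (Hermite interpolation lemma, equal input/output case.) Let H(s) = C(sE − A)⁻¹B + D with m = p, and let μ ∈ ℂ not be an eigenvalue of A − sE. Let V, W be n×d matrices whose column spans contain, for j = 0,…,q, the columns of ((A − μE)⁻¹E)ʲ(A − μE)⁻¹B and of (C(A − μE)⁻¹(E(A − μE)⁻¹)ʲ)ᴴ respectively. Define the reduced transfer function H_red(s) = CV(sWᴴEV − WᴴAV)⁻¹WᴴB + D. If μ is not a pole of H_red (i.e., μWᴴEV − WᴴAV is invertible), then H^{(j)}(μ) = H_red^{(j)}(μ) for all j = 0, 1, …, 2q+1. -/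
open Matrix
open scoped Nat

attribute [local instance] Matrix.normedAddCommGroup Matrix.normedSpace


theorem HasDerivAt.matrix_mul {a b c : ℕ} {f : ℂ → Matrix (Fin a) (Fin b) ℂ}
    {g : ℂ → Matrix (Fin b) (Fin c) ℂ} {f' : Matrix (Fin a) (Fin b) ℂ}
    {g' : Matrix (Fin b) (Fin c) ℂ} {x : ℂ}
    (hf : HasDerivAt f f' x) (hg : HasDerivAt g g' x) :
    HasDerivAt (fun t => f t * g t) (f' * g x + f x * g') x := by
  have hf' : ∀ i k, HasDerivAt (fun t => f t i k) (f' i k) x :=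
    fun i k => hasDerivAt_pi.1 (hasDerivAt_pi.1 hf i) k
  have hg' : ∀ k j, HasDerivAt (fun t => g t k j) (g' k j) x :=
    fun k j => hasDerivAt_pi.1 (hasDerivAt_pi.1 hg k) j
  refine hasDerivAt_pi.2 ?_
  intro i
  refine hasDerivAt_pi.2 ?_
  intro j
  have : ∀ k, HasDerivAt (fun t => f t i k * g t k j)
      (f' i k * g x k j + f x i k * g' k j) x :=
    fun k => (hf' i k).mul (hg' k j)
  have h := HasDerivAt.sum (u := Finset.univ) (fun k _ => this k)
  convert h using 1
  · ext t; simp [Matrix.mul_apply, Finset.sum_apply]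
  simp [Matrix.mul_apply, Matrix.add_apply, Finset.sum_add_distrib]

theorem differentiableAt_matrix_det {N : ℕ} {M : ℂ → Matrix (Fin N) (Fin N) ℂ} {s : ℂ}
    (h : ∀ i j, DifferentiableAt ℂ (fun t => M t i j) s) :
    DifferentiableAt ℂ (fun t => (M t).det) s := by
  simp only [Matrix.det_apply']
  exact DifferentiableAt.fun_sum fun σ _ =>
    (DifferentiableAt.fun_finsetProd (fun i _ => h (σ i) i)).const_mul _

section Resolvent

variable {N : ℕ} (A E : Matrix (Fin N) (Fin N) ℂ)

/-- entrywise differentiability of the affine pencil -/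
theorem pencil_entry_diff (s : ℂ) (i j : Fin N) :
    DifferentiableAt ℂ (fun t : ℂ => (t • E - A) i j) s := by
  simp only [Matrix.sub_apply, Matrix.smul_apply, smul_eq_mul]
  exact (differentiableAt_id.mul_const _).sub_const _

theorem pencil_det_diff (s : ℂ) :
    DifferentiableAt ℂ (fun t : ℂ => (t • E - A).det) s :=
  differentiableAt_matrix_det (fun i j => pencil_entry_diff A E s i j)

theorem pencil_det_cont : Continuous (fun t : ℂ => (t • E - A).det) := by
  rw [continuous_iff_continuousAt]
  exact fun s => (pencil_det_diff A E s).continuousAt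

theorem pencil_hasDerivAt (s : ℂ) : HasDerivAt (fun t : ℂ => t • E - A) E s := by
  have h : HasDerivAt (fun t : ℂ => t • E) ((1 : ℂ) • E) s :=
    (hasDerivAt_id s).smul_const E
  have h2 := h.sub_const A
  simp only [one_smul] at h2
  exact h2

theorem resolvent_diff {s : ℂ} (hs : (s • E - A).det ≠ 0) :
    DifferentiableAt ℂ (fun t : ℂ => (t • E - A)⁻¹) s := by
  have hdet := pencil_det_diff A E s
  have hadj : ∀ i j, DifferentiableAt ℂ (fun t : ℂ => (t • E - A).adjugate i j) s := by
    intro i j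
    simp only [Matrix.adjugate_apply]
    refine differentiableAt_matrix_det (fun i' j' => ?_)
    rcases eq_or_ne i' j with rfl | h
    · simp only [Matrix.updateRow_self]
      exact differentiableAt_const _
    · simp only [Matrix.updateRow_ne h]
      exact pencil_entry_diff A E s i' j'
  refine differentiableAt_pi.2 ?_
  intro i
  refine differentiableAt_pi.2 ?_
  intro j
  have : (fun t : ℂ => (t • E - A)⁻¹ i j) =
      fun t : ℂ => ((t • E - A).det)⁻¹ * (t • E - A).adjugate i j := by
    funext t
    rw [Matrix.inv_def, Ring.inverse_eq_inv', Matrix.smul_apply, smul_eq_mul]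
  rw [this]
  exact (hdet.inv hs).mul (hadj i j)

theorem resolvent_hasDerivAt {s : ℂ} (hs : IsUnit (s • E - A).det) :
    HasDerivAt (fun t : ℂ => (t • E - A)⁻¹)
      (-((s • E - A)⁻¹ * E * (s • E - A)⁻¹)) s := by
  have hs' : (s • E - A).det ≠ 0 := by
    simpa [isUnit_iff_ne_zero] using hs
  have hg : HasDerivAt (fun t : ℂ => (t • E - A)⁻¹)
      (deriv (fun t : ℂ => (t • E - A)⁻¹) s) s :=
    (resolvent_diff A E hs').hasDerivAt
  set g' := deriv (fun t : ℂ => (t • E - A)⁻¹) s with hg'def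
  -- eventually, the inverse is a genuine inverse
  have hev : ∀ᶠ t in nhds s, (fun t : ℂ => (t • E - A)⁻¹ * (t • E - A)) t = 1 := by
    have hne : ∀ᶠ t in nhds s, (t • E - A).det ≠ 0 :=
      (pencil_det_cont A E).continuousAt.eventually_ne hs'
    filter_upwards [hne] with t ht
    exact Matrix.nonsing_inv_mul _ (isUnit_iff_ne_zero.2 ht)
  have hprod : HasDerivAt (fun t : ℂ => (t • E - A)⁻¹ * (t • E - A))
      (g' * (s • E - A) + (s • E - A)⁻¹ * E) s :=
    hg.matrix_mul (pencil_hasDerivAt A E s)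
  have hconst : HasDerivAt (fun t : ℂ => (t • E - A)⁻¹ * (t • E - A)) 0 s :=
    (hasDerivAt_const s (1 : Matrix (Fin N) (Fin N) ℂ)).congr_of_eventuallyEq hev
  have heq : g' * (s • E - A) + (s • E - A)⁻¹ * E = 0 := hprod.unique hconst
  have hMg : (s • E - A) * (s • E - A)⁻¹ = 1 := Matrix.mul_nonsing_inv _ hs
  have : g' = -((s • E - A)⁻¹ * E * (s • E - A)⁻¹) := by
    have h1 : g' * (s • E - A) = -((s • E - A)⁻¹ * E) :=
      eq_neg_of_add_eq_zero_left heq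
    calc g' = g' * ((s • E - A) * (s • E - A)⁻¹) := by rw [hMg, mul_one]
    _ = (g' * (s • E - A)) * (s • E - A)⁻¹ := by rw [mul_assoc]
    _ = -((s • E - A)⁻¹ * E) * (s • E - A)⁻¹ := by rw [h1]
    _ = -((s • E - A)⁻¹ * E * (s • E - A)⁻¹) := by rw [neg_mul]
  rw [← this]; exact hg

end Resolvent

section Resolvent2
variable {N m : ℕ} (A E : Matrix (Fin N) (Fin N) ℂ)

theorem resolvent_pow_hasDerivAt (j : ℕ) {s : ℂ} (hs : IsUnit (s • E - A).det) :
    HasDerivAt (fun t : ℂ => ((t • E - A)⁻¹ * E) ^ j * (t • E - A)⁻¹)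
      (-(((j : ℂ) + 1) • (((s • E - A)⁻¹ * E) ^ (j + 1) * (s • E - A)⁻¹))) s := by
  induction j with
  | zero =>
    simpa using resolvent_hasDerivAt A E hs
  | succ j ih =>
    have h1 : HasDerivAt (fun t : ℂ => (t • E - A)⁻¹ * E)
        (-((s • E - A)⁻¹ * E * (s • E - A)⁻¹) * E) s := by
      simpa using (resolvent_hasDerivAt A E hs).matrix_mul (hasDerivAt_const s E)
    have h2 := h1.matrix_mul ih
    have hfun : (fun t : ℂ => ((t • E - A)⁻¹ * E) ^ (j + 1) * (t • E - A)⁻¹) =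
        fun t : ℂ => ((t • E - A)⁻¹ * E) * (((t • E - A)⁻¹ * E) ^ j * (t • E - A)⁻¹) := by
      funext t; rw [pow_succ', mul_assoc]
    rw [hfun]
    convert h2 using 1
    simp only [pow_succ', Matrix.mul_assoc, neg_mul, mul_neg, Matrix.mul_smul,
      Matrix.smul_mul, smul_neg, Nat.cast_succ]
    module

theorem transfer_iteratedDeriv (B : Matrix (Fin N) (Fin m) ℂ) (C : Matrix (Fin m) (Fin N) ℂ)
    (D : Matrix (Fin m) (Fin m) ℂ) (μ : ℂ) (hμ : IsUnit (μ • E - A).det) (j : ℕ) :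
    iteratedDeriv j (fun s : ℂ => C * (s • E - A)⁻¹ * B + D) μ =
      ((-1) ^ j * (j ! : ℂ)) •
        (C * (((μ • E - A)⁻¹ * E) ^ j * (μ • E - A)⁻¹) * B) +
      (if j = 0 then D else 0) := by
  induction j generalizing μ with
  | zero =>
    simp [iteratedDeriv_zero, Matrix.mul_assoc]
  | succ j ih =>
    rw [iteratedDeriv_succ]
    have hμ' : (μ • E - A).det ≠ 0 := by simpa [isUnit_iff_ne_zero] using hμ
    have hev : iteratedDeriv j (fun s : ℂ => C * (s • E - A)⁻¹ * B + D) =ᶠ[nhds μ]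
        (fun u : ℂ => ((-1) ^ j * (j ! : ℂ)) •
          (C * (((u • E - A)⁻¹ * E) ^ j * (u • E - A)⁻¹) * B) +
          (if j = 0 then D else 0)) := by
      have hne : ∀ᶠ u in nhds μ, (u • E - A).det ≠ 0 :=
        (pencil_det_cont A E).continuousAt.eventually_ne hμ'
      filter_upwards [hne] with u hu
      exact ih u (isUnit_iff_ne_zero.2 hu)
    rw [hev.deriv_eq]
    have hG := resolvent_pow_hasDerivAt A E j hμ
    have hc : HasDerivAt (fun u : ℂ => ((-1) ^ j * (j ! : ℂ)) •
        (C * (((u • E - A)⁻¹ * E) ^ j * (u • E - A)⁻¹) * B) +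
        (if j = 0 then D else 0))
        (((-1) ^ j * (j ! : ℂ)) •
          (C * (-(((j : ℂ) + 1) • (((μ • E - A)⁻¹ * E) ^ (j + 1) * (μ • E - A)⁻¹))) * B)) μ := by
      have := (((hasDerivAt_const μ C).matrix_mul hG).matrix_mul
          (hasDerivAt_const μ B)).const_smul ((-1 : ℂ) ^ j * (j ! : ℂ))
      exact (this.add_const (if j = 0 then D else 0)).congr_deriv (by simp)
    rw [hc.deriv]
    simp only [Matrix.mul_smul, Matrix.smul_mul, mul_neg, Matrix.mul_neg, Matrix.neg_mul,
      smul_neg, smul_smul, Nat.factorial_succ, Nat.add_eq, if_neg (Nat.succ_ne_zero j)]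
    rw [add_zero]
    rw [← neg_smul]
    congr 1
    push_cast
    ring

end Resolvent2


theorem shift_pow {α : Type*} [Monoid α] (x y : α) : ∀ k : ℕ, (x * y) ^ k * x = x * (y * x) ^ k
  | 0 => by simp
  | k + 1 => by
    rw [pow_succ', mul_assoc, shift_pow x y k]
    simp only [pow_succ', mul_assoc]

theorem exists_factor_of_cols_mem {n d k : ℕ} (V : Matrix (Fin n) (Fin d) ℂ)
    (X : Matrix (Fin n) (Fin k) ℂ)
    (h : ∀ c, Xᵀ c ∈ Submodule.span ℂ (Set.range fun c' : Fin d => Vᵀ c')) :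
    ∃ Z : Matrix (Fin d) (Fin k) ℂ, X = V * Z := by
  have h' : ∀ c, ∃ z : Fin d → ℂ, ∑ i, z i • Vᵀ i = Xᵀ c := by
    intro c
    exact (Submodule.mem_span_range_iff_exists_fun ℂ).1 (h c)
  choose z hz using h'
  refine ⟨Matrix.of fun i c => z c i, ?_⟩
  ext r c
  have := congrFun (hz c) r
  simp only [Finset.sum_apply, Pi.smul_apply, Matrix.transpose_apply, smul_eq_mul] at this
  rw [Matrix.mul_apply, ← this]
  exact Finset.sum_congr rfl fun i _ => mul_comm _ _

theorem algebra_key {n m d : ℕ} (q : ℕ)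
    (E P R S : Matrix (Fin n) (Fin n) ℂ)
    (B : Matrix (Fin n) (Fin m) ℂ) (C : Matrix (Fin m) (Fin n) ℂ)
    (V : Matrix (Fin n) (Fin d) ℂ) (N : Matrix (Fin d) (Fin n) ℂ)
    (hPR : P * R = 1) (hRP : R * P = 1)
    (hSPV : S * P * V = V) (hNPS : N * P * S = N)
    (hx : ∀ i ≤ q, ∃ Z : Matrix (Fin d) (Fin m) ℂ, (R * E) ^ i * (R * B) = V * Z)
    (hy : ∀ i ≤ q, ∃ Z : Matrix (Fin m) (Fin d) ℂ, (C * R) * (E * R) ^ i = Z * N) :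
    ∀ j ≤ 2 * q + 1, C * ((S * E) ^ j * S) * B = C * ((R * E) ^ j * R) * B := by
  have hfix : ∀ {k : ℕ} (X : Matrix (Fin n) (Fin k) ℂ),
      (∃ Z : Matrix (Fin d) (Fin k) ℂ, X = V * Z) → S * (P * X) = X := by
    rintro k X ⟨Z, rfl⟩
    rw [← Matrix.mul_assoc, ← Matrix.mul_assoc, hSPV]
  have hfix' : ∀ {k : ℕ} (Y : Matrix (Fin k) (Fin n) ℂ),
      (∃ Z : Matrix (Fin k) (Fin d) ℂ, Y = Z * N) → Y * P * S = Y := by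
    rintro k Y ⟨Z, rfl⟩
    rw [Matrix.mul_assoc Z, Matrix.mul_assoc Z, hNPS]
  have hEx : ∀ a : ℕ, E * ((R * E) ^ a * (R * B)) = P * ((R * E) ^ (a + 1) * (R * B)) := by
    intro a
    rw [pow_succ']
    calc E * ((R * E) ^ a * (R * B))
        = (P * R) * (E * ((R * E) ^ a * (R * B))) := by rw [hPR, Matrix.one_mul]
      _ = P * (R * E * (R * E) ^ a * (R * B)) := by simp only [Matrix.mul_assoc]
  have hyE : ∀ b : ℕ, ((C * R) * (E * R) ^ b) * E = ((C * R) * (E * R) ^ (b + 1)) * P := by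
    intro b
    rw [pow_succ]
    calc ((C * R) * (E * R) ^ b) * E
        = ((C * R) * (E * R) ^ b) * (E * (R * P)) := by rw [hRP, Matrix.mul_one]
      _ = C * R * ((E * R) ^ b * (E * R)) * P := by simp only [Matrix.mul_assoc]
  have A1 : ∀ a, a ≤ q → (S * E) ^ a * (S * B) = (R * E) ^ a * (R * B) := by
    intro a
    induction a with
    | zero =>
      intro _
      simp only [pow_zero, Matrix.one_mul]
      calc S * B = S * (P * (R * B)) := by rw [← Matrix.mul_assoc P R B, hPR, Matrix.one_mul]
        _ = R * B := hfix _ (by simpa using hx 0 (Nat.zero_le q))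
    | succ a ih =>
      intro ha
      have ha' : a ≤ q := Nat.le_of_succ_le ha
      calc (S * E) ^ (a + 1) * (S * B)
          = (S * E) * ((S * E) ^ a * (S * B)) := by
            rw [pow_succ', Matrix.mul_assoc (S * E) ((S * E) ^ a) (S * B)]
        _ = (S * E) * ((R * E) ^ a * (R * B)) := by rw [ih ha']
        _ = S * (P * ((R * E) ^ (a + 1) * (R * B))) := by rw [Matrix.mul_assoc, hEx a]
        _ = (R * E) ^ (a + 1) * (R * B) := hfix _ (hx (a + 1) ha)
  have A2 : ∀ b, b ≤ q → (C * S) * (E * S) ^ b = (C * R) * (E * R) ^ b := by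
    intro b
    induction b with
    | zero =>
      intro _
      simp only [pow_zero, Matrix.mul_one]
      have h0 := hfix' (C * R) (by simpa using hy 0 (Nat.zero_le q))
      calc C * S = (C * (R * P)) * S := by rw [hRP, Matrix.mul_one]
        _ = ((C * R) * P) * S := by rw [Matrix.mul_assoc C R P]
        _ = C * R := h0
    | succ b ih =>
      intro hb
      have hb' : b ≤ q := Nat.le_of_succ_le hb
      calc (C * S) * (E * S) ^ (b + 1)
          = ((C * S) * (E * S) ^ b) * (E * S) := by
            rw [pow_succ, ← Matrix.mul_assoc (C * S) ((E * S) ^ b) (E * S)]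
        _ = ((C * R) * (E * R) ^ b) * (E * S) := by rw [ih hb']
        _ = (((C * R) * (E * R) ^ (b + 1)) * P) * S := by
            rw [← Matrix.mul_assoc ((C * R) * (E * R) ^ b) E S, hyE b]
        _ = (C * R) * (E * R) ^ (b + 1) := hfix' _ (hy (b + 1) hb)
  intro j hj
  by_cases hjq : j ≤ q
  · calc C * ((S * E) ^ j * S) * B
        = C * ((S * E) ^ j * (S * B)) := by simp only [Matrix.mul_assoc]
      _ = C * ((R * E) ^ j * (R * B)) := by rw [A1 j hjq]
      _ = C * ((R * E) ^ j * R) * B := by simp only [Matrix.mul_assoc]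
  · push_neg at hjq
    obtain ⟨a, rfl⟩ : ∃ a, j = q + 1 + a := ⟨j - (q + 1), by omega⟩
    have ha : a ≤ q := by omega
    have hpowS : (S * E) ^ (q + 1 + a) = (S * E) ^ q * (S * E) * (S * E) ^ a := by
      rw [pow_add, pow_succ]
    have hpowR : (R * E) ^ (q + 1 + a) = (R * E) ^ q * (R * E) * (R * E) ^ a := by
      rw [pow_add, pow_succ]
    calc C * ((S * E) ^ (q + 1 + a) * S) * B
        = C * ((S * E) ^ q * (S * (E * ((S * E) ^ a * (S * B))))) := by
          rw [hpowS]; simp only [Matrix.mul_assoc]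
      _ = ((C * S) * (E * S) ^ q) * (E * ((S * E) ^ a * (S * B))) := by
          rw [← Matrix.mul_assoc ((S * E) ^ q) S, shift_pow S E q]
          simp only [Matrix.mul_assoc]
      _ = ((C * R) * (E * R) ^ q) * (E * ((R * E) ^ a * (R * B))) := by
          rw [A2 q le_rfl, A1 a ha]
      _ = C * ((R * E) ^ (q + 1 + a) * R) * B := by
          rw [hpowR, Matrix.mul_assoc C R, ← shift_pow R E q]
          simp only [Matrix.mul_assoc]


/-- Hermite interpolation lemma (square case `m = p`): if the Krylov-type directions of
order up to `q` at `μ` lie in the column spans of `V` and `W`, the reduced transfer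
function matches the full one together with all derivatives up to order `2q+1` at `μ`. -/
theorem hermite_interpolation_square {n m d : ℕ} (q : ℕ)
    (A E : Matrix (Fin n) (Fin n) ℂ)
    (B : Matrix (Fin n) (Fin m) ℂ) (C : Matrix (Fin m) (Fin n) ℂ)
    (D : Matrix (Fin m) (Fin m) ℂ) (μ : ℂ)
    (V W : Matrix (Fin n) (Fin d) ℂ)
    (hVrank : LinearIndependent ℂ (fun c : Fin d => Vᵀ c))
    (hWrank : LinearIndependent ℂ (fun c : Fin d => Wᵀ c))
    (hμ : IsUnit (A - μ • E).det)
    (hred : IsUnit (μ • (Wᴴ * E * V) - Wᴴ * A * V).det)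
    (hV : ∀ j ≤ q, ∀ c : Fin m,
      ((((A - μ • E)⁻¹ * E) ^ j * ((A - μ • E)⁻¹ * B))ᵀ c) ∈
        Submodule.span ℂ (Set.range (fun c' : Fin d => Vᵀ c')))
    (hW : ∀ j ≤ q, ∀ c : Fin m,
      (((C * (A - μ • E)⁻¹ * (E * (A - μ • E)⁻¹) ^ j)ᴴ)ᵀ c) ∈
        Submodule.span ℂ (Set.range (fun c' : Fin d => Wᵀ c'))) :
    ∀ j ≤ 2 * q + 1,
      iteratedDeriv j (fun s : ℂ => C * (s • E - A)⁻¹ * B + D) μ =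
        iteratedDeriv j
          (fun s : ℂ => (C * V) * (s • (Wᴴ * E * V) - Wᴴ * A * V)⁻¹ * (Wᴴ * B) + D) μ := by
  intro j hj
  -- full pencil is invertible at μ
  have hdet_ne : (A - μ • E).det ≠ 0 := by simpa [isUnit_iff_ne_zero] using hμ
  have hneg : μ • E - A = -(A - μ • E) := (neg_sub _ _).symm
  have hμ' : IsUnit ((μ • E : Matrix (Fin n) (Fin n) ℂ) - A).det := by
    rw [hneg, Matrix.det_neg]
    exact isUnit_iff_ne_zero.2
      (mul_ne_zero (pow_ne_zero _ (neg_ne_zero.2 one_ne_zero)) hdet_ne)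
  rw [transfer_iteratedDeriv A E B C D μ hμ' j,
    transfer_iteratedDeriv (Wᴴ * A * V) (Wᴴ * E * V) (Wᴴ * B) (C * V) D μ hred j]
  congr 1
  congr 1
  -- notation
  set P : Matrix (Fin n) (Fin n) ℂ := μ • E - A with hPdef
  set R : Matrix (Fin n) (Fin n) ℂ := P⁻¹ with hRdef
  set Mr : Matrix (Fin d) (Fin d) ℂ := μ • (Wᴴ * E * V) - Wᴴ * A * V with hMrdef
  set Rr : Matrix (Fin d) (Fin d) ℂ := Mr⁻¹ with hRrdef
  set S : Matrix (Fin n) (Fin n) ℂ := V * Rr * Wᴴ with hSdef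
  have hPR : P * R = 1 := Matrix.mul_nonsing_inv _ hμ'
  have hRP : R * P = 1 := Matrix.nonsing_inv_mul _ hμ'
  have hMrRr : Mr * Rr = 1 := Matrix.mul_nonsing_inv _ hred
  have hRrMr : Rr * Mr = 1 := Matrix.nonsing_inv_mul _ hred
  have hWPV : Wᴴ * P * V = Mr := by
    rw [hPdef, hMrdef, Matrix.mul_sub, Matrix.sub_mul, Matrix.mul_smul, Matrix.smul_mul,
      Matrix.mul_assoc, Matrix.mul_assoc]
  have hSPV : S * P * V = V := by
    calc S * P * V = V * Rr * (Wᴴ * P * V) := by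
          rw [hSdef]; simp only [Matrix.mul_assoc]
      _ = V * (Rr * Mr) := by rw [hWPV, Matrix.mul_assoc]
      _ = V := by rw [hRrMr, Matrix.mul_one]
  have hNPS : Wᴴ * P * S = Wᴴ := by
    calc Wᴴ * P * S = (Wᴴ * P * V) * Rr * Wᴴ := by
          rw [hSdef]; simp only [Matrix.mul_assoc]
      _ = (Mr * Rr) * Wᴴ := by rw [hWPV, Matrix.mul_assoc]
      _ = Wᴴ := by rw [hMrRr, Matrix.one_mul]
  -- inverse of A - μ•E is -R
  have hAinv : (A - μ • E)⁻¹ = -R := by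
    apply Matrix.inv_eq_right_inv
    rw [Matrix.mul_neg, show A - μ • E = -P from by rw [hPdef, neg_sub], Matrix.neg_mul,
      neg_neg, hPR]
  -- sign conversions
  have hsignx : ∀ i : ℕ, ((A - μ • E)⁻¹ * E) ^ i * ((A - μ • E)⁻¹ * B) =
      ((-1 : ℂ) ^ (i + 1)) • ((R * E) ^ i * (R * B)) := by
    intro i
    rw [hAinv, Matrix.neg_mul, Matrix.neg_mul, ← neg_one_smul ℂ (R * E),
      ← neg_one_smul ℂ (R * B), smul_pow, Matrix.smul_mul, Matrix.mul_smul, smul_smul,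
      pow_succ]
  have hsigny : ∀ i : ℕ, C * (A - μ • E)⁻¹ * (E * (A - μ • E)⁻¹) ^ i =
      ((-1 : ℂ) ^ (i + 1)) • ((C * R) * (E * R) ^ i) := by
    intro i
    rw [hAinv, Matrix.mul_neg, Matrix.mul_neg, ← neg_one_smul ℂ (C * R),
      ← neg_one_smul ℂ (E * R), smul_pow, Matrix.smul_mul, Matrix.mul_smul, smul_smul,
      pow_succ]
    congr 1
    ring
  have hx : ∀ i ≤ q, ∃ Z : Matrix (Fin d) (Fin m) ℂ, (R * E) ^ i * (R * B) = V * Z := by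
    intro i hi
    obtain ⟨Z, hZ⟩ := exists_factor_of_cols_mem V _ (hV i hi)
    rw [hsignx i] at hZ
    refine ⟨((-1 : ℂ) ^ (i + 1))⁻¹ • Z, ?_⟩
    rw [Matrix.mul_smul, ← hZ, smul_smul,
      inv_mul_cancel₀ (pow_ne_zero _ (neg_ne_zero.2 one_ne_zero)), one_smul]
  have hy : ∀ i ≤ q, ∃ Z : Matrix (Fin m) (Fin d) ℂ, (C * R) * (E * R) ^ i = Z * Wᴴ := by
    intro i hi
    obtain ⟨Z, hZ⟩ := exists_factor_of_cols_mem W _ (hW i hi)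
    have hY : C * (A - μ • E)⁻¹ * (E * (A - μ • E)⁻¹) ^ i = Zᴴ * Wᴴ := by
      rw [← Matrix.conjTranspose_conjTranspose (C * (A - μ • E)⁻¹ * (E * (A - μ • E)⁻¹) ^ i),
        hZ, Matrix.conjTranspose_mul]
    rw [hsigny i] at hY
    refine ⟨((-1 : ℂ) ^ (i + 1))⁻¹ • Zᴴ, ?_⟩
    rw [Matrix.smul_mul, ← hY, smul_smul,
      inv_mul_cancel₀ (pow_ne_zero _ (neg_ne_zero.2 one_ne_zero)), one_smul]
  -- telescoping
  have T : ∀ k : ℕ, V * ((Rr * (Wᴴ * E * V)) ^ k * Rr) * Wᴴ = (S * E) ^ k * S := by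
    intro k
    induction k with
    | zero => rw [pow_zero, pow_zero, Matrix.one_mul, Matrix.one_mul, hSdef]
    | succ k ih =>
      calc V * ((Rr * (Wᴴ * E * V)) ^ (k + 1) * Rr) * Wᴴ
          = S * E * (V * ((Rr * (Wᴴ * E * V)) ^ k * Rr) * Wᴴ) := by
            rw [hSdef, pow_succ']; simp only [Matrix.mul_assoc]
        _ = S * E * ((S * E) ^ k * S) := by rw [ih]
        _ = (S * E) ^ (k + 1) * S := by
            simp only [pow_succ', Matrix.mul_assoc]
  have halg := algebra_key q E P R S B C V Wᴴ hPR hRP hSPV hNPS hx hy j hj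
  rw [← halg, ← T j]
  simp only [Matrix.mul_assoc]
end

section
/- (One-sided moment matching, order 0.) Let μ ∈ ℂ with A − μE invertible, and let V be an n×d matrix of full column rank such that the columns of (A − μE)⁻¹B lie in the column space of V. Let W be an n×d matrix such that μWᴴEV − WᴴAV is invertible. Then C(μE − A)⁻¹B = CV(μWᴴEV − WᴴAV)⁻¹WᴴB, i.e., the reduced transfer function matches the full transfer function at μ. -/
open Matrix

/-- One-sided moment matching of order 0: if the columns of `(A − μE)⁻¹B` lie in the
column space of `V` and the reduced pencil is invertible at `μ`, then the reduced
transfer function matches the full one at `μ`. -/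
theorem one_sided_moment_matching {n m p d : ℕ}
    (A E : Matrix (Fin n) (Fin n) ℂ)
    (B : Matrix (Fin n) (Fin m) ℂ) (C : Matrix (Fin p) (Fin n) ℂ) (μ : ℂ)
    (V W : Matrix (Fin n) (Fin d) ℂ)
    (hVrank : LinearIndependent ℂ (fun c : Fin d => Vᵀ c))
    (hμ : (A - μ • E).det ≠ 0)
    (hV : ∀ c : Fin m, (((A - μ • E)⁻¹ * B)ᵀ c) ∈
      Submodule.span ℂ (Set.range (fun c' : Fin d => Vᵀ c')))
    (hred : (μ • (Wᴴ * E * V) - Wᴴ * A * V).det ≠ 0) :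
    C * (μ • E - A)⁻¹ * B =
      (C * V) * (μ • (Wᴴ * E * V) - Wᴴ * A * V)⁻¹ * (Wᴴ * B) := by
  set S := A - μ • E with hS
  have hSu : IsUnit S.det := isUnit_iff_ne_zero.mpr hμ
  set K := μ • (Wᴴ * E * V) - Wᴴ * A * V with hKdef
  have hKu : IsUnit K.det := isUnit_iff_ne_zero.mpr hred
  -- choose coefficient matrix G with V * G = S⁻¹ * B
  choose g hg using fun c => (Submodule.mem_span_range_iff_exists_fun ℂ).mp (hV c)
  set G : Matrix (Fin d) (Fin m) ℂ := Matrix.of (fun i c => g c i) with hGdef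
  have hGeq : V * G = S⁻¹ * B := by
    ext r c
    have := congrFun (hg c) r
    simpa [Matrix.mul_apply, Matrix.transpose_apply, hGdef, mul_comm] using this
  -- K = -(Wᴴ * S * V)
  have hKS : K = -(Wᴴ * S * V) := by
    simp only [hKdef, hS, Matrix.sub_mul, Matrix.mul_sub, Matrix.smul_mul,
      Matrix.mul_smul, neg_sub]
  have hSVG : S * (V * G) = B := by
    rw [hGeq, Matrix.mul_nonsing_inv_cancel_left _ _ hSu]
  have hKG : K * G = -(Wᴴ * B) := by
    rw [hKS]
    calc -(Wᴴ * S * V) * G = -(Wᴴ * (S * (V * G))) := by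
          simp [Matrix.mul_assoc]
      _ = -(Wᴴ * B) := by rw [hSVG]
  have hKinv : K⁻¹ * (Wᴴ * B) = -G := by
    have : K⁻¹ * (K * G) = K⁻¹ * (-(Wᴴ * B)) := by rw [hKG]
    rw [Matrix.nonsing_inv_mul_cancel_left _ _ hKu] at this
    rw [Matrix.mul_neg] at this
    rw [this, neg_neg]
  have hneg : (μ • E - A)⁻¹ = -S⁻¹ := by
    apply Matrix.inv_eq_right_inv
    have : μ • E - A = -S := by rw [hS]; abel
    rw [this, Matrix.neg_mul, Matrix.mul_neg, neg_neg,
      Matrix.mul_nonsing_inv _ hSu]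
  calc C * (μ • E - A)⁻¹ * B = -(C * (V * G)) := by
        rw [hneg, hGeq]
        simp [Matrix.mul_assoc]
    _ = (C * V) * K⁻¹ * (Wᴴ * B) := by
        rw [Matrix.mul_assoc, hKinv]
        simp [Matrix.mul_assoc]
end

section
/- Let r : ℝ with r(R; B, C) the structured stability radius defined as the infimum of ‖Δ‖₂ over Δ ∈ ℂ^{m̃×p̃} such that (J − (R + BΔC))Q has an eigenvalue on the imaginary axis. If h(ω) := σ_max(CQ(iωI − (J−R)Q)⁻¹B) and s* := sup_{ω∈ℝ} h(ω) is finite and positive, then any Δ with ‖Δ‖₂ < 1/s* yields a perturbed matrix (J − (R+BΔC))Q with no purely imaginary eigenvalues; i.e., r(R; B, C) ≥ 1/sup_{ω} h(ω). -/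
open Matrix
open scoped ComplexOrder

noncomputable def specNorm {p m : ℕ} (M : Matrix (Fin p) (Fin m) ℂ) : ℝ :=
  ‖LinearMap.toContinuousLinearMap (Matrix.toEuclideanLin M)‖

lemma specNorm_mul_le {p m q : ℕ} (A : Matrix (Fin p) (Fin m) ℂ)
    (B : Matrix (Fin m) (Fin q) ℂ) :
    specNorm (A * B) ≤ specNorm A * specNorm B := by
  have h : Matrix.toEuclideanLin (A * B)
      = (Matrix.toEuclideanLin A).comp (Matrix.toEuclideanLin B) := by
    ext v
    simp [Matrix.toEuclideanLin_apply, Matrix.mulVec_mulVec]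
  have : LinearMap.toContinuousLinearMap (Matrix.toEuclideanLin (A * B))
      = (LinearMap.toContinuousLinearMap (Matrix.toEuclideanLin A)).comp
        (LinearMap.toContinuousLinearMap (Matrix.toEuclideanLin B)) := by
    ext v
    simp [h]
  rw [specNorm, this]
  exact ContinuousLinearMap.opNorm_comp_le _ _

lemma det_one_add_ne_zero {m : ℕ} (K : Matrix (Fin m) (Fin m) ℂ)
    (hK : specNorm K < 1) : (1 + K).det ≠ 0 := by
  intro hdet
  obtain ⟨v, hv0, hv⟩ := Matrix.exists_mulVec_eq_zero_iff.mpr hdet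
  have hKv : K *ᵥ v = -v := by
    have := hv
    rw [Matrix.add_mulVec, Matrix.one_mulVec] at this
    linear_combination (norm := module) this
  set w : EuclideanSpace ℂ (Fin m) := (WithLp.equiv 2 (Fin m → ℂ)).symm v with hw
  have hw0 : w ≠ 0 := by
    simpa [hw] using hv0
  have happ : Matrix.toEuclideanLin K w = -w := by
    rw [hw, WithLp.equiv_symm_apply, Matrix.toEuclideanLin_apply_piLp_toLp, hKv]
    rfl
  have hle : ‖Matrix.toEuclideanLin K w‖ ≤ specNorm K * ‖w‖ := by
    exact (LinearMap.toContinuousLinearMap (Matrix.toEuclideanLin K)).le_opNorm w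
  rw [happ, norm_neg] at hle
  have hwpos : 0 < ‖w‖ := norm_pos_iff.mpr hw0
  have : specNorm K * ‖w‖ < 1 * ‖w‖ := mul_lt_mul_of_pos_right hK hwpos
  rw [one_mul] at this
  exact absurd (lt_of_le_of_lt hle this) (lt_irrefl _)

/-- Small-gain lower bound for the structured stability radius of a linear dissipative
Hamiltonian system: perturbations with `‖Δ‖₂ < 1/sup_ω h(ω)` cannot move eigenvalues of
`(J − (R + BΔC))Q` onto the imaginary axis. -/
theorem DH_stability_radius_lower_bound {nt mt pt : ℕ}
    (J R Q : Matrix (Fin nt) (Fin nt) ℂ)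
    (B : Matrix (Fin nt) (Fin mt) ℂ) (C : Matrix (Fin pt) (Fin nt) ℂ)
    (hJ : Jᴴ = -J) (hR : R.PosSemidef) (hQ : Q.PosDef)
    (hinv : ∀ ω : ℝ, IsUnit (((Complex.I * ω) • (1 : Matrix (Fin nt) (Fin nt) ℂ) -
      (J - R) * Q)).det)
    (sstar : ℝ) (hs : 0 < sstar)
    (hsup : ∀ ω : ℝ,
      specNorm (C * Q * ((Complex.I * ω) • (1 : Matrix (Fin nt) (Fin nt) ℂ) -
        (J - R) * Q)⁻¹ * B) ≤ sstar) :
    ∀ Δ : Matrix (Fin mt) (Fin pt) ℂ, specNorm Δ < 1 / sstar →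
      ∀ ω : ℝ,
        (((Complex.I * ω) • (1 : Matrix (Fin nt) (Fin nt) ℂ) -
          (J - (R + B * Δ * C)) * Q)).det ≠ 0 := by
  intro Δ hΔ ω
  set M₀ : Matrix (Fin nt) (Fin nt) ℂ :=
    (Complex.I * ω) • (1 : Matrix (Fin nt) (Fin nt) ℂ) - (J - R) * Q with hM₀
  have h₀ : IsUnit M₀.det := hinv ω
  have hM₀inv : M₀ * M₀⁻¹ = 1 := Matrix.mul_nonsing_inv _ h₀
  -- rewrite the perturbed matrix
  have hsplit : (Complex.I * ω) • (1 : Matrix (Fin nt) (Fin nt) ℂ) -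
      (J - (R + B * Δ * C)) * Q = M₀ + B * Δ * C * Q := by
    rw [hM₀]
    noncomm_ring
  rw [hsplit]
  have hfact : M₀ + B * Δ * C * Q = M₀ * (1 + M₀⁻¹ * B * (Δ * C * Q)) := by
    have h' : M₀ * (1 + M₀⁻¹ * B * (Δ * C * Q))
        = M₀ + (M₀ * M₀⁻¹) * (B * (Δ * C * Q)) := by
      simp [Matrix.mul_add, Matrix.mul_assoc]
    rw [h', hM₀inv, Matrix.one_mul]
    simp [Matrix.mul_assoc]
  rw [hfact, Matrix.det_mul]
  have hcomm : (1 + M₀⁻¹ * B * (Δ * C * Q)).det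
      = (1 + Δ * (C * Q * M₀⁻¹ * B)).det := by
    rw [Matrix.det_one_add_mul_comm (M₀⁻¹ * B) (Δ * C * Q)]
    congr 1
    simp [Matrix.mul_assoc]
  have hK : specNorm (Δ * (C * Q * M₀⁻¹ * B)) < 1 := by
    have h1 : specNorm (Δ * (C * Q * M₀⁻¹ * B))
        ≤ specNorm Δ * specNorm (C * Q * M₀⁻¹ * B) := specNorm_mul_le _ _
    have h2 : specNorm (C * Q * M₀⁻¹ * B) ≤ sstar := hsup ω
    have h3 : specNorm Δ * specNorm (C * Q * M₀⁻¹ * B) ≤ specNorm Δ * sstar :=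
      mul_le_mul_of_nonneg_left h2 (norm_nonneg _)
    have h4 : specNorm Δ * sstar < (1 / sstar) * sstar :=
      mul_lt_mul_of_pos_right hΔ hs
    have h5 : (1 / sstar) * sstar = 1 := by
      field_simp
    linarith
  have hne : (1 + Δ * (C * Q * M₀⁻¹ * B)).det ≠ 0 := det_one_add_ne_zero _ hK
  intro hcontra
  rcases mul_eq_zero.mp hcontra with h | h
  · exact h₀.ne_zero h
  · rw [hcomm] at h
    exact hne h
end

section
/- Let λ ∈ ℂ be a simple finite eigenvalue of the regular pencil L(s) = A − sE with right and left eigenvectors v, w (Av = λEv, wᴴA = λwᴴE) normalized so that wᴴEv = 1. Then in a punctured neighborhood of λ, the function s ↦ (s − λ)·C(sE − A)⁻¹B converges to (Cv)(wᴴB) as s → λ; i.e., the residue of H(s) = C(sE−A)⁻¹B + D at the simple pole λ equals (Cv)(wᴴB). -/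
open Matrix Filter Topology

/-- Residue of the transfer function at a simple pole: `(s − λ)C(sE − A)⁻¹B → (Cv)(wᴴB)`
as `s → λ`, under the Kronecker-form hypothesis with pairwise distinct finite
eigenvalues. -/
theorem residue_at_simple_pole {nt k m p : ℕ}
    (A E : Matrix (Fin (nt + 1) ⊕ Fin k) (Fin (nt + 1) ⊕ Fin k) ℂ)
    (B : Matrix (Fin (nt + 1) ⊕ Fin k) (Fin m) ℂ)
    (C : Matrix (Fin p) (Fin (nt + 1) ⊕ Fin k) ℂ)
    (D : Matrix (Fin p) (Fin m) ℂ)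
    (W V : Matrix (Fin (nt + 1) ⊕ Fin k) (Fin (nt + 1) ⊕ Fin k) ℂ)
    (hW : IsUnit W.det) (hV : IsUnit V.det)
    (lam : Fin (nt + 1) → ℂ) (hdist : Function.Injective lam)
    (hA : Wᴴ * A * V = Matrix.fromBlocks (Matrix.diagonal lam) 0 0 1)
    (hE : Wᴴ * E * V = Matrix.fromBlocks 1 0 0 0) :
    Filter.Tendsto (fun s : ℂ => (s - lam 0) • (C * (s • E - A)⁻¹ * B))
      (nhdsWithin (lam 0) {lam 0}ᶜ)
      (nhds (Matrix.vecMulVec (C *ᵥ (fun i => V i (Sum.inl 0)))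
        (Matrix.vecMul (star (fun i => W i (Sum.inl 0))) B))) := by
  classical
  set l := nhdsWithin (lam 0) {lam 0}ᶜ with hl
  set Finv : ℂ → Matrix (Fin (nt + 1) ⊕ Fin k) (Fin (nt + 1) ⊕ Fin k) ℂ :=
    fun s => Matrix.fromBlocks (Matrix.diagonal fun i => (s - lam i)⁻¹) 0 0 (-1) with hFinv
  set S : Matrix (Fin (nt + 1) ⊕ Fin k) (Fin (nt + 1) ⊕ Fin k) ℂ :=
    Matrix.fromBlocks (Matrix.diagonal fun i : Fin (nt + 1) => if i = 0 then (1:ℂ) else 0) 0 0 0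
    with hS
  have hWH : IsUnit (Wᴴ).det := by
    rw [Matrix.det_conjTranspose]; exact (isUnit_star).mpr hW
  -- inverse formula
  have hinv : ∀ s : ℂ, (∀ i, s ≠ lam i) → (s • E - A)⁻¹ = V * Finv s * Wᴴ := by
    intro s hs
    have hF : Wᴴ * (s • E - A) * V
        = Matrix.fromBlocks (Matrix.diagonal fun i => s - lam i) 0 0 (-1) := by
      have h1 : Wᴴ * (s • E - A) * V = s • (Wᴴ * E * V) - Wᴴ * A * V := by
        rw [Matrix.mul_sub, Matrix.sub_mul, Matrix.mul_smul, Matrix.smul_mul]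
      rw [h1, hA, hE]
      ext i j
      rcases i with a | a <;> rcases j with b | b
      · by_cases h : a = b <;>
          simp [h, Matrix.one_apply, Matrix.diagonal_apply, Matrix.smul_apply]
      · simp
      · simp
      · simp [Matrix.smul_apply]
    have hFmul : Matrix.fromBlocks (Matrix.diagonal fun i => s - lam i) 0 0
        (-1 : Matrix (Fin k) (Fin k) ℂ) * Finv s = 1 := by
      rw [hFinv, Matrix.fromBlocks_multiply]
      have hd : (Matrix.diagonal fun i => s - lam i) *
          (Matrix.diagonal fun i => (s - lam i)⁻¹) = 1 := by
        rw [Matrix.diagonal_mul_diagonal]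
        have h2 : (fun i => (s - lam i) * (s - lam i)⁻¹) = fun _ => (1:ℂ) :=
          funext fun i => mul_inv_cancel₀ (sub_ne_zero.mpr (hs i))
        rw [h2, Matrix.diagonal_one]
      rw [hd]
      simp [Matrix.fromBlocks_one]
    have key : (s • E - A) * (V * Finv s * Wᴴ) = 1 := by
      have h1 : Wᴴ * ((s • E - A) * (V * Finv s * Wᴴ)) = Wᴴ := by
        calc Wᴴ * ((s • E - A) * (V * Finv s * Wᴴ))
            = (Wᴴ * (s • E - A) * V) * Finv s * Wᴴ := by
              simp only [Matrix.mul_assoc]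
          _ = Wᴴ := by rw [hF, Matrix.mul_assoc, ← Matrix.mul_assoc _ (Finv s), hFmul,
              Matrix.one_mul]
      have h2 := congrArg (fun M => (Wᴴ)⁻¹ * M) h1
      simpa [← Matrix.mul_assoc, Matrix.nonsing_inv_mul _ hWH] using h2
    exact Matrix.inv_eq_right_inv key
  -- eventually, s avoids all eigenvalues
  have hall : ∀ᶠ s in l, ∀ i, s ≠ lam i := by
    rw [eventually_all]
    intro i
    by_cases hi : i = 0
    · subst hi
      exact eventually_mem_nhdsWithin.mono fun s hs => hs
    · have hne : lam 0 ≠ lam i := fun h => hi (hdist h).symm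
      exact (eventually_ne_nhds hne).filter_mono nhdsWithin_le_nhds
  -- eventual rewriting of the function
  have hev : ∀ᶠ s in l, (s - lam 0) • (C * (s • E - A)⁻¹ * B)
      = (C * V) * ((s - lam 0) • Finv s) * (Wᴴ * B) := by
    filter_upwards [hall] with s hs
    rw [hinv s hs]
    simp only [Matrix.smul_mul, Matrix.mul_smul, Matrix.mul_assoc]
  -- tendsto of the middle block
  have hsub : Tendsto (fun s : ℂ => s - lam 0) l (nhds 0) := by
    have h0 : Tendsto (fun s : ℂ => s - lam 0) (nhds (lam 0)) (nhds (lam 0 - lam 0)) :=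
      (continuous_id.sub continuous_const).tendsto _
    simpa using h0.mono_left nhdsWithin_le_nhds
  have hG : Tendsto (fun s => (s - lam 0) • Finv s) l (nhds S) := by
    refine tendsto_pi_nhds.mpr ?_
    intro i
    rw [tendsto_pi_nhds]
    intro j
    rcases i with a | a <;> rcases j with b | b
    · by_cases hab : a = b
      · subst hab
        by_cases ha : a = 0
        · subst ha
          have h2 : (S (Sum.inl (0 : Fin (nt+1))) (Sum.inl 0) : ℂ) = 1 := by simp [hS]
          rw [h2]
          refine Tendsto.congr' ?_ tendsto_const_nhds
          filter_upwards [hall] with s hs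
          simp [hFinv, Matrix.smul_apply, smul_eq_mul,
            mul_inv_cancel₀ (sub_ne_zero.mpr (hs 0))]
        · have h2 : (S (Sum.inl a) (Sum.inl a) : ℂ) = 0 := by simp [hS, ha]
          rw [h2]
          have hne : lam 0 - lam a ≠ 0 :=
            sub_ne_zero.mpr fun h => ha (hdist h).symm
          have hinvc : Tendsto (fun s : ℂ => (s - lam a)⁻¹) l (nhds ((lam 0 - lam a)⁻¹)) := by
            have h3 : Tendsto (fun s : ℂ => (s - lam a)⁻¹) (nhds (lam 0))
                (nhds ((lam 0 - lam a)⁻¹)) :=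
              ((continuous_id.sub continuous_const).tendsto _).inv₀ hne
            exact h3.mono_left nhdsWithin_le_nhds
          have h4 := hsub.mul hinvc
          simp only [zero_mul] at h4
          refine Tendsto.congr (fun s => ?_) h4
          simp [hFinv, Matrix.smul_apply, smul_eq_mul]
      · have h0 : ∀ s : ℂ, (((s - lam 0) • Finv s) (Sum.inl a) (Sum.inl b) : ℂ) = 0 := by
          intro s; simp [hFinv, Matrix.smul_apply, Matrix.diagonal_apply_ne _ hab]
        have h2 : (S (Sum.inl a) (Sum.inl b) : ℂ) = 0 := by
          simp [hS, Matrix.diagonal_apply_ne _ hab]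
        rw [h2]
        exact Tendsto.congr (fun s => (h0 s).symm) tendsto_const_nhds
    · have h0 : ∀ s : ℂ, (((s - lam 0) • Finv s) (Sum.inl a) (Sum.inr b) : ℂ) = 0 := by
        intro s; simp [hFinv, Matrix.smul_apply]
      have h2 : (S (Sum.inl a) (Sum.inr b) : ℂ) = 0 := by simp [hS]
      rw [h2]
      exact Tendsto.congr (fun s => (h0 s).symm) tendsto_const_nhds
    · have h0 : ∀ s : ℂ, (((s - lam 0) • Finv s) (Sum.inr a) (Sum.inl b) : ℂ) = 0 := by
        intro s; simp [hFinv, Matrix.smul_apply]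
      have h2 : (S (Sum.inr a) (Sum.inl b) : ℂ) = 0 := by simp [hS]
      rw [h2]
      exact Tendsto.congr (fun s => (h0 s).symm) tendsto_const_nhds
    · have heq : ∀ s : ℂ, (((s - lam 0) • Finv s) (Sum.inr a) (Sum.inr b) : ℂ)
          = (s - lam 0) * (-(1 : Matrix (Fin k) (Fin k) ℂ)) a b := by
        intro s; simp [hFinv, Matrix.smul_apply, smul_eq_mul]
      have h2 : (S (Sum.inr a) (Sum.inr b) : ℂ) = 0 := by simp [hS]
      rw [h2]
      have h4 := hsub.mul (tendsto_const_nhds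
        (x := (-(1 : Matrix (Fin k) (Fin k) ℂ)) a b) (f := l))
      simp only [zero_mul] at h4
      exact Tendsto.congr (fun s => (heq s).symm) h4
  -- continuity of the outer multiplication
  have hcont : Continuous fun X : Matrix (Fin (nt + 1) ⊕ Fin k) (Fin (nt + 1) ⊕ Fin k) ℂ =>
      (C * V) * X * (Wᴴ * B) :=
    (continuous_const.matrix_mul continuous_id).matrix_mul continuous_const
  have hlim : Tendsto (fun s => (C * V) * ((s - lam 0) • Finv s) * (Wᴴ * B)) l
      (nhds ((C * V) * S * (Wᴴ * B))) := (hcont.tendsto S).comp hG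
  -- identify the limit
  have hfinal : (C * V) * S * (Wᴴ * B)
      = Matrix.vecMulVec (C *ᵥ (fun i => V i (Sum.inl 0)))
        (Matrix.vecMul (star (fun i => W i (Sum.inl 0))) B) := by
    have hS' : ∀ x y, S x y = if x = Sum.inl 0 ∧ y = Sum.inl 0 then (1:ℂ) else 0 := by
      intro x y
      rcases x with a | a <;> rcases y with b | b
      · rw [hS]
        simp only [Matrix.fromBlocks_apply₁₁, Sum.inl.injEq]
        by_cases hab : a = b
        · subst hab
          by_cases h0 : a = 0
          · subst h0; simp [Matrix.diagonal_apply_eq]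
          · simp [Matrix.diagonal_apply_eq, h0]
        · rw [Matrix.diagonal_apply_ne _ hab, if_neg]
          rintro ⟨h1, h2⟩
          exact hab (h1.trans h2.symm)
      · simp [hS]
      · simp [hS]
      · simp [hS]
    ext i j
    simp only [Matrix.mul_apply, hS', Matrix.vecMulVec_apply, Matrix.mulVec, Matrix.vecMul,
      dotProduct, Matrix.conjTranspose_apply, Pi.star_apply, mul_ite, mul_one, mul_zero,
      ite_and]
    simp [Finset.sum_ite_eq', ite_mul, zero_mul]
  rw [← hfinal]
  exact Tendsto.congr' (hev.mono fun s h => h.symm) hlim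
end
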